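/- Define c̃_1 = −b̃_{0,1}/b̃_{1,1}, c̃_{n+1} = b̃_{n−1,n}/b̃_{n,n} − b̃_{n,n+1}/b̃_{n+1,n+1} for n ≥ 1, and λ̃_{n+1} = (b̃_{n−1,n−1}/b̃_{n,n})² for n ≥ 1. Then c̃_1 = (p;q)_∞·q^{−3/2}/Δ_1; for n ≥ 1, c̃_{n+1} = [(1−q^{n+1})·(pq^n;q)_∞ − (1−pq^{n+1})·(q^n;q)_∞]·q^{−2n−3/2}/((1−q)·Δ_{n+1}) − [(1−q^n)·(pq^{n−1};q)_∞ − (1−pq^n)·(q^{n−1};q)_∞]·q^{−2n+1/2}/((1−q)·Δ_n); and for n ≥ 1, λ̃_{n+1} = (Δ_{n−1}·Δ_{n+1}/Δ_n²)·(1−q^n)·(1−pq^n)·q^{−4n}. -/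

import Mathlib

/-- Finite q-shifted factorial `(z;q)_n`. -/
noncomputable def qp (z q : ℝ) (n : ℕ) : ℝ := ∏ k ∈ Finset.range n, (1 - z * q ^ k)

/-- Infinite q-shifted factorial `(z;q)_∞`. -/
noncomputable def qpInf (z q : ℝ) : ℝ := ∏' k : ℕ, (1 - z * q ^ k)

/-- Gaussian q-binomial coefficient. -/
noncomputable def qbinom (q : ℝ) (n k : ℕ) : ℝ := qp q q n / (qp q q k * qp q q (n - k))

/-- `Δ_n = (pq^n;q)_∞ − (q^n;q)_∞`. -/
noncomputable def Δ (p q : ℝ) (n : ℕ) : ℝ := qpInf (p * q ^ n) q - qpInf (q ^ n) q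

/-- The normalizing constant `C̃_n`. -/
noncomputable def Ct (p q : ℝ) (n : ℕ) : ℝ :=
  (-1) ^ n * q ^ ((n : ℝ) / 2 + 1 / 4) * Real.sqrt (qp p q (n + 1) / qp q q n) *
    qpInf (p * q ^ (n + 1)) q / Real.sqrt (Δ p q n * Δ p q (n + 1))

/-- Coefficients `b̃_{k,n}` of the modified generalized Stieltjes–Wigert
orthonormal polynomials. -/
noncomputable def bt (p q : ℝ) (k n : ℕ) : ℝ :=
  Ct p q n * (-1) ^ k * qbinom q n k * (q ^ ((k : ℝ) ^ 2 + (k : ℝ) / 2) / qp p q k) *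
    (1 - (1 - q ^ k) / (1 - p * q ^ k) * (qpInf (q ^ (n + 1)) q / qpInf (p * q ^ (n + 1)) q))


/-!
Two facts about `(z;q)_∞` drive everything: the shift `(z;q)_∞ = (1 - z) (zq;q)_∞`, and
monotonicity in `z`, read off from `(z;q)_∞ = exp (∑ log (1 - z q^k))`. By the shift, the last
factor of `b̃_{k,n}` is
`((1 - pq^k)(pq^{n+1};q)_∞ - (1 - q^k)(q^{n+1};q)_∞) / ((1 - pq^k)(pq^{n+1};q)_∞)`,
which for `k = n` is `Δ_n / ((1 - pq^n)(pq^{n+1};q)_∞)`; monotonicity gives `Δ_n > 0`.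
In `b̃_{n,n+1} / b̃_{n+1,n+1}` the constant `C̃_{n+1}` cancels, and `b̃_{n,n}²` is explicit
once the square roots in `C̃_n²` are removed; the three formulas then follow by cancelling.
-/

open Real

section QPochhammer

variable {z q : ℝ}

lemma one_sub_mul_pow_pos (hz0 : 0 ≤ z) (hz1 : z < 1) (hq0 : 0 ≤ q) (hq1 : q ≤ 1) (k : ℕ) :
    0 < 1 - z * q ^ k := by
  have : z * q ^ k ≤ z := mul_le_of_le_one_right hz0 (pow_le_one₀ hq0 hq1)
  linarith

lemma qp_pos (hz0 : 0 ≤ z) (hz1 : z < 1) (hq0 : 0 ≤ q) (hq1 : q ≤ 1) (n : ℕ) :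
    0 < qp z q n :=
  Finset.prod_pos fun k _ => one_sub_mul_pow_pos hz0 hz1 hq0 hq1 k

lemma qp_succ (z q : ℝ) (n : ℕ) : qp z q (n + 1) = qp z q n * (1 - z * q ^ n) :=
  Finset.prod_range_succ _ _

lemma qbinom_self {n : ℕ} (h : qp q q n ≠ 0) : qbinom q n n = 1 := by
  have h0 : qp q q 0 = 1 := Finset.prod_range_zero _
  rw [qbinom, Nat.sub_self, h0, mul_one, div_self h]

lemma summable_mul_pow (z : ℝ) (hq : |q| < 1) : Summable fun k : ℕ => z * q ^ k :=
  (summable_geometric_of_abs_lt_one hq).mul_left z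

lemma multipliable_one_sub_mul_pow (z : ℝ) (hq : |q| < 1) :
    Multipliable fun k : ℕ => 1 - z * q ^ k := by
  simpa only [sub_eq_add_neg] using
    Real.multipliable_one_add_of_summable (summable_mul_pow z hq).neg

lemma summable_log_one_sub_mul_pow (z : ℝ) (hq : |q| < 1) :
    Summable fun k : ℕ => log (1 - z * q ^ k) := by
  simpa only [sub_eq_add_neg] using
    Real.summable_log_one_add_of_summable (summable_mul_pow z hq).neg

lemma qpInf_eq_one_sub_mul (z : ℝ) (hq : |q| < 1) : qpInf z q = (1 - z) * qpInf (z * q) q := by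
  have hterm : ∀ k : ℕ, 1 - z * q ^ (k + 1) = 1 - z * q * q ^ k := fun k => by ring
  have htail : Multipliable fun k : ℕ => 1 - z * q ^ (k + 1) :=
    (multipliable_one_sub_mul_pow (z * q) hq).congr fun k => (hterm k).symm
  rw [qpInf, tprod_eq_zero_mul' (f := fun k : ℕ => 1 - z * q ^ k) htail, pow_zero, mul_one,
    qpInf, tprod_congr hterm]

lemma qpInf_one_left (q : ℝ) : qpInf 1 q = 0 :=
  (hasProd_zero_of_exists_eq_zero ⟨0, by simp⟩).tprod_eq

lemma qpInf_eq_exp_tsum_log (hz0 : 0 ≤ z) (hz1 : z < 1) (hq0 : 0 ≤ q) (hq1 : q < 1) :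
    qpInf z q = exp (∑' k : ℕ, log (1 - z * q ^ k)) :=
  (Real.rexp_tsum_eq_tprod (one_sub_mul_pow_pos hz0 hz1 hq0 hq1.le)
    (summable_log_one_sub_mul_pow z (abs_lt.mpr ⟨by linarith, hq1⟩))).symm

lemma qpInf_pos (hz0 : 0 ≤ z) (hz1 : z < 1) (hq0 : 0 ≤ q) (hq1 : q < 1) : 0 < qpInf z q := by
  rw [qpInf_eq_exp_tsum_log hz0 hz1 hq0 hq1]
  exact exp_pos _

lemma qpInf_le_qpInf {w : ℝ} (hw0 : 0 ≤ w) (hwz : w ≤ z) (hz1 : z < 1) (hq0 : 0 ≤ q)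
    (hq1 : q < 1) : qpInf z q ≤ qpInf w q := by
  have hq : |q| < 1 := abs_lt.mpr ⟨by linarith, hq1⟩
  rw [qpInf_eq_exp_tsum_log (hw0.trans hwz) hz1 hq0 hq1,
    qpInf_eq_exp_tsum_log hw0 (hwz.trans_lt hz1) hq0 hq1, exp_le_exp]
  refine Summable.tsum_le_tsum (fun k => ?_) (summable_log_one_sub_mul_pow z hq)
    (summable_log_one_sub_mul_pow w hq)
  gcongr
  exact one_sub_mul_pow_pos (hw0.trans hwz) hz1 hq0 hq1.le k

end QPochhammer

section Shift

variable {q : ℝ} (hq : |q| < 1)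
include hq

lemma qpInf_mul_pow_eq (z : ℝ) (n : ℕ) :
    qpInf (z * q ^ n) q = (1 - z * q ^ n) * qpInf (z * q ^ (n + 1)) q := by
  rw [qpInf_eq_one_sub_mul _ hq, pow_succ, mul_assoc]

lemma qpInf_pow_eq (n : ℕ) : qpInf (q ^ n) q = (1 - q ^ n) * qpInf (q ^ (n + 1)) q := by
  rw [qpInf_eq_one_sub_mul _ hq, pow_succ]

lemma Δ_eq (p : ℝ) (n : ℕ) :
    Δ p q n = (1 - p * q ^ n) * qpInf (p * q ^ (n + 1)) q
      - (1 - q ^ n) * qpInf (q ^ (n + 1)) q := by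
  rw [Δ, qpInf_mul_pow_eq hq, qpInf_pow_eq hq]

end Shift

section Coefficients

variable {p q : ℝ} (hq0 : 0 < q) (hq1 : q < 1)
include hq0 hq1

lemma abs_lt_one_of_pos_of_lt_one : |q| < 1 := abs_lt.mpr ⟨by linarith, hq1⟩

lemma qp_self_pos (n : ℕ) : 0 < qp q q n := qp_pos hq0.le hq1 hq0.le hq1.le n

lemma qpInf_pow_pos {n : ℕ} (hn : n ≠ 0) : 0 < qpInf (q ^ n) q :=
  qpInf_pos (by positivity) (pow_lt_one₀ hq0.le hq1 hn) hq0.le hq1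

lemma qbinom_succ_self (n : ℕ) : qbinom q (n + 1) n = (1 - q ^ (n + 1)) / (1 - q) := by
  have h1 : qp q q 1 = 1 - q := by simp [qp]
  have hn := (qp_self_pos hq0 hq1 n).ne'
  have hq : 1 - q ≠ 0 := by linarith
  rw [qbinom, Nat.add_sub_cancel_left, h1, qp_succ, ← pow_succ']
  field_simp

variable (hp0 : 0 ≤ p) (hp1 : p < 1)
include hp0 hp1

lemma qpInf_mul_pow_pos (n : ℕ) : 0 < qpInf (p * q ^ n) q :=
  qpInf_pos (by positivity) (by linarith [one_sub_mul_pow_pos hp0 hp1 hq0.le hq1.le n]) hq0.le hq1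

lemma Δ_pos (n : ℕ) : 0 < Δ p q n := by
  have hG := qpInf_pow_pos hq0 hq1 n.succ_ne_zero
  have hGP : qpInf (q ^ (n + 1)) q ≤ qpInf (p * q ^ (n + 1)) q :=
    qpInf_le_qpInf (by positivity) (mul_le_of_le_one_left (by positivity) hp1.le)
      (pow_lt_one₀ hq0.le hq1 n.succ_ne_zero) hq0.le hq1
  have hlt : 1 - q ^ n < 1 - p * q ^ n := by nlinarith [pow_pos hq0 n]
  rw [Δ_eq (abs_lt_one_of_pos_of_lt_one hq0 hq1), sub_pos]
  calc (1 - q ^ n) * qpInf (q ^ (n + 1)) q < (1 - p * q ^ n) * qpInf (q ^ (n + 1)) q :=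
        mul_lt_mul_of_pos_right hlt hG
    _ ≤ (1 - p * q ^ n) * qpInf (p * q ^ (n + 1)) q :=
        mul_le_mul_of_nonneg_left hGP (one_sub_mul_pow_pos hp0 hp1 hq0.le hq1.le n).le

lemma Ct_ne_zero (n : ℕ) : Ct p q n ≠ 0 := by
  have hqp := div_pos (qp_pos hp0 hp1 hq0.le hq1.le (n + 1)) (qp_self_pos hq0 hq1 n)
  have hΔ := mul_pos (Δ_pos hq0 hq1 hp0 hp1 n) (Δ_pos hq0 hq1 hp0 hp1 (n + 1))
  have := qpInf_mul_pow_pos hq0 hq1 hp0 hp1 (n + 1)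
  have := rpow_pos_of_pos hq0 ((n : ℝ) / 2 + 1 / 4)
  rw [Ct]
  positivity

lemma Ct_sq (n : ℕ) :
    Ct p q n ^ 2 = q ^ ((n : ℝ) + 1 / 2) * qp p q (n + 1) / qp q q n
      * qpInf (p * q ^ (n + 1)) q ^ 2 / (Δ p q n * Δ p q (n + 1)) := by
  have hqp := div_pos (qp_pos hp0 hp1 hq0.le hq1.le (n + 1)) (qp_self_pos hq0 hq1 n)
  have hΔ := mul_pos (Δ_pos hq0 hq1 hp0 hp1 n) (Δ_pos hq0 hq1 hp0 hp1 (n + 1))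
  have hrpow : (q ^ ((n : ℝ) / 2 + 1 / 4)) ^ 2 = q ^ ((n : ℝ) + 1 / 2) := by
    rw [← rpow_natCast, ← rpow_mul hq0.le]
    ring_nf
  rw [Ct, div_pow, mul_pow, mul_pow, mul_pow, ← pow_mul, hrpow, sq_sqrt hqp.le, sq_sqrt hΔ.le]
  simp only [mul_comm n 2, pow_mul, neg_one_sq, one_pow, one_mul]
  ring

lemma bt_eq (k n : ℕ) :
    bt p q k n = Ct p q n * (-1) ^ k * qbinom q n k * q ^ ((k : ℝ) ^ 2 + (k : ℝ) / 2)
      * ((1 - p * q ^ k) * qpInf (p * q ^ (n + 1)) q - (1 - q ^ k) * qpInf (q ^ (n + 1)) q)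
      / (qp p q (k + 1) * qpInf (p * q ^ (n + 1)) q) := by
  have ha := (one_sub_mul_pow_pos hp0 hp1 hq0.le hq1.le k).ne'
  have hP := (qpInf_mul_pow_pos hq0 hq1 hp0 hp1 (n + 1)).ne'
  rw [bt, qp_succ]
  generalize 1 - p * q ^ k = a at ha ⊢
  generalize qpInf (p * q ^ (n + 1)) q = P at hP ⊢
  field_simp

lemma bt_self (n : ℕ) :
    bt p q n n = Ct p q n * (-1) ^ n * q ^ ((n : ℝ) ^ 2 + (n : ℝ) / 2) * Δ p q n
      / (qp p q (n + 1) * qpInf (p * q ^ (n + 1)) q) := by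
  rw [bt_eq hq0 hq1 hp0 hp1, qbinom_self (qp_self_pos hq0 hq1 n).ne', mul_one,
    ← Δ_eq (abs_lt_one_of_pos_of_lt_one hq0 hq1)]

lemma bt_div_bt_succ (n : ℕ) :
    bt p q n (n + 1) / bt p q (n + 1) (n + 1)
      = -((1 - q ^ (n + 1)) * qpInf (p * q ^ n) q - (1 - p * q ^ (n + 1)) * qpInf (q ^ n) q)
        * (q ^ (-2 * (n : ℝ) - 3 / 2) / ((1 - q) * Δ p q (n + 1))) := by
  have hq := abs_lt_one_of_pos_of_lt_one hq0 hq1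
  have hnum : (1 - q ^ (n + 1)) * qpInf (p * q ^ n) q - (1 - p * q ^ (n + 1)) * qpInf (q ^ n) q
      = (1 - q ^ (n + 1)) * (1 - p * q ^ (n + 1))
        * ((1 - p * q ^ n) * qpInf (p * q ^ (n + 2)) q - (1 - q ^ n) * qpInf (q ^ (n + 2)) q) := by
    rw [qpInf_mul_pow_eq hq, qpInf_mul_pow_eq hq p (n + 1), qpInf_pow_eq hq,
      qpInf_pow_eq hq (n + 1)]
    ring
  have hexp : q ^ ((n : ℝ) ^ 2 + (n : ℝ) / 2)
      = q ^ (((n + 1 : ℕ) : ℝ) ^ 2 + ((n + 1 : ℕ) : ℝ) / 2)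
        * q ^ (-2 * (n : ℝ) - 3 / 2) := by
    rw [← rpow_add hq0]
    push_cast
    ring_nf
  have := (Ct_ne_zero hq0 hq1 hp0 hp1 (n + 1))
  have := (qpInf_mul_pow_pos hq0 hq1 hp0 hp1 (n + 2)).ne'
  have := (qp_pos hp0 hp1 hq0.le hq1.le (n + 1)).ne'
  rw [hnum, bt_eq hq0 hq1 hp0 hp1, bt_self hq0 hq1 hp0 hp1, qbinom_succ_self hq0 hq1, hexp,
    qp_succ p q (n + 1), pow_succ (-1 : ℝ) n]
  field_simp

lemma bt_self_sq (n : ℕ) :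
    bt p q n n ^ 2 = q ^ (2 * (n : ℝ) ^ 2 + 2 * (n : ℝ) + 1 / 2) * Δ p q n
      / (qp p q (n + 1) * qp q q n * Δ p q (n + 1)) := by
  have hrpow : (q ^ ((n : ℝ) ^ 2 + (n : ℝ) / 2)) ^ 2 * q ^ ((n : ℝ) + 1 / 2)
      = q ^ (2 * (n : ℝ) ^ 2 + 2 * (n : ℝ) + 1 / 2) := by
    rw [← rpow_natCast, ← rpow_mul hq0.le, ← rpow_add hq0]
    ring_nf
  have := (qpInf_mul_pow_pos hq0 hq1 hp0 hp1 (n + 1)).ne'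
  rw [bt_self hq0 hq1 hp0 hp1, div_pow, mul_pow, mul_pow, mul_pow, mul_pow, Ct_sq hq0 hq1 hp0 hp1,
    ← hrpow, ← pow_mul, mul_comm n 2, pow_mul, neg_one_sq, one_pow]
  field_simp

lemma sq_bt_self_div_bt_self_succ (n : ℕ) :
    (bt p q n n / bt p q (n + 1) (n + 1)) ^ 2
      = Δ p q n * Δ p q (n + 2) / Δ p q (n + 1) ^ 2
        * ((1 - q ^ (n + 1)) * (1 - p * q ^ (n + 1)))
        * q ^ (-(4 : ℝ) * ((n + 1 : ℕ) : ℝ)) := by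
  have hexp : q ^ (2 * (n : ℝ) ^ 2 + 2 * (n : ℝ) + 1 / 2)
      = q ^ (2 * ((n + 1 : ℕ) : ℝ) ^ 2 + 2 * ((n + 1 : ℕ) : ℝ) + 1 / 2)
        * q ^ (-(4 : ℝ) * ((n + 1 : ℕ) : ℝ)) := by
    rw [← rpow_add hq0]
    push_cast
    ring_nf
  have := (qp_pos hp0 hp1 hq0.le hq1.le (n + 1)).ne'
  have := (qp_self_pos hq0 hq1 n).ne'
  have : 1 - q ^ (n + 1) ≠ 0 := (sub_pos.mpr (pow_lt_one₀ hq0.le hq1 n.succ_ne_zero)).ne'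
  rw [div_pow, bt_self_sq hq0 hq1 hp0 hp1, bt_self_sq hq0 hq1 hp0 hp1, hexp,
    qp_succ p q (n + 1), qp_succ q q n, ← pow_succ']
  field_simp

end Coefficients

theorem stmt_12 (p q : ℝ) (hp0 : 0 ≤ p) (hp1 : p < 1) (hq0 : 0 < q) (hq1 : q < 1) :
    (-(bt p q 0 1) / bt p q 1 1 = qpInf p q * q ^ (-(3 : ℝ) / 2) / Δ p q 1) ∧
    (∀ n : ℕ, 1 ≤ n →
      bt p q (n - 1) n / bt p q n n - bt p q n (n + 1) / bt p q (n + 1) (n + 1)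
        = ((1 - q ^ (n + 1)) * qpInf (p * q ^ n) q -
              (1 - p * q ^ (n + 1)) * qpInf (q ^ n) q) *
            (q ^ (-2 * (n : ℝ) - 3 / 2) / ((1 - q) * Δ p q (n + 1))) -
          ((1 - q ^ n) * qpInf (p * q ^ (n - 1)) q -
              (1 - p * q ^ n) * qpInf (q ^ (n - 1)) q) *
            (q ^ (-2 * (n : ℝ) + 1 / 2) / ((1 - q) * Δ p q n))) ∧
    (∀ n : ℕ, 1 ≤ n →
      (bt p q (n - 1) (n - 1) / bt p q n n) ^ 2
        = Δ p q (n - 1) * Δ p q (n + 1) / (Δ p q n) ^ 2 *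
            ((1 - q ^ n) * (1 - p * q ^ n)) * q ^ (-(4 : ℝ) * (n : ℝ))) := by
  have ratio := bt_div_bt_succ hq0 hq1 hp0 hp1
  refine ⟨?_, fun n hn => ?_, fun n hn => ?_⟩
  · have hΔ := (Δ_pos hq0 hq1 hp0 hp1 1).ne'
    rw [neg_div, ratio 0]
    simp only [pow_zero, zero_add, pow_one, mul_one, qpInf_one_left, mul_zero, sub_zero,
      CharP.cast_eq_zero]
    have : (1 : ℝ) - q ≠ 0 := by linarith
    field_simp
    norm_num
  all_goals obtain ⟨m, rfl⟩ := Nat.exists_eq_add_one.mpr hn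
  · have hexp : -2 * ((m + 1 : ℕ) : ℝ) + 1 / 2 = -2 * (m : ℝ) - 3 / 2 := by push_cast; ring
    rw [Nat.add_sub_cancel, ratio m, ratio (m + 1), hexp]
    ring
  · rw [Nat.add_sub_cancel, sq_bt_self_div_bt_self_succ hq0 hq1 hp0 hp1]
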